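/- Let X, Y ∈ ℝ^{2n×2n} with Y symmetric and Y ≥ i(σ_{2n} − X σ_{2n} X^T) as complex Hermitian matrices. Then rank(Y) ≥ rank(σ_{2n} − X σ_{2n} X^T). -/

import Mathlib

/-!
`S = σ - X σ Xᵀ` is skew-symmetric, so for a real vector `v` with `Y v = 0` the quadratic form of
the positive semidefinite matrix `Y - i S` vanishes at `v`. Hence `(Y - i S) v = 0`, i.e. `S v = 0`.
Thus `ker Y ⊆ ker S`, and rank–nullity gives `rank S ≤ rank Y`.
-/

open Matrix ComplexOrder

/-- The standard symplectic form `σ_{2k} = [[0, I_k], [-I_k, 0]]`. -/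
def symJ (k : ℕ) : Matrix (Fin k ⊕ Fin k) (Fin k ⊕ Fin k) ℝ :=
  Matrix.fromBlocks 0 1 (-1) 0

lemma symJ_transpose (k : ℕ) : (symJ k)ᵀ = -symJ k := by
  rw [symJ, fromBlocks_transpose, fromBlocks_neg]
  simp

namespace Matrix

theorem transpose_mul_mul_transpose_of_transpose_eq_neg {R ι κ : Type*} [CommRing R] [Fintype κ]
    {A : Matrix κ κ R} (hA : Aᵀ = -A) (X : Matrix ι κ R) :
    (X * A * Xᵀ)ᵀ = -(X * A * Xᵀ) := by
  rw [transpose_mul, transpose_mul, transpose_transpose, hA, Matrix.mul_assoc, Matrix.neg_mul,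
    Matrix.mul_neg]

variable {ι : Type*} [Fintype ι]

theorem dotProduct_mulVec_self_eq_zero_of_transpose_eq_neg {R : Type*} [CommRing R]
    [NoZeroDivisors R] [CharZero R] {A : Matrix ι ι R} (hA : Aᵀ = -A) (v : ι → R) :
    v ⬝ᵥ A *ᵥ v = 0 := by
  rw [← CharZero.eq_neg_self_iff]
  conv_lhs => rw [dotProduct_mulVec, ← mulVec_transpose, hA, neg_mulVec, neg_dotProduct,
    dotProduct_comm]

theorem rank_le_rank_of_ker_mulVecLin_le {K m m' : Type*} [Field K] [Fintype m] [Fintype m']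
    {A : Matrix m ι K} {B : Matrix m' ι K}
    (h : LinearMap.ker A.mulVecLin ≤ LinearMap.ker B.mulVecLin) : B.rank ≤ A.rank := by
  have hA := LinearMap.finrank_range_add_finrank_ker A.mulVecLin
  have hB := LinearMap.finrank_range_add_finrank_ker B.mulVecLin
  have hker := Submodule.finrank_mono h
  rw [rank, rank]
  omega

theorem map_ofReal_mulVec {m : Type*} (A : Matrix m ι ℝ) (v : ι → ℝ) :
    A.map Complex.ofReal *ᵥ (Complex.ofReal ∘ v) = Complex.ofReal ∘ (A *ᵥ v) := by
  ext i
  exact (RingHom.map_mulVec Complex.ofRealHom A v i).symm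

end Matrix

open Complex in
theorem mulVec_eq_zero_of_posSemidef_sub_I_smul {ι : Type*} [Fintype ι] {Y S : Matrix ι ι ℝ}
    (hS : Sᵀ = -S) (hYS : (Y.map ofReal - I • S.map ofReal).PosSemidef) {v : ι → ℝ}
    (hv : Y *ᵥ v = 0) : S *ᵥ v = 0 := by
  set w : ι → ℂ := ofReal ∘ v
  have hYw : Y.map ofReal *ᵥ w = 0 := by
    rw [map_ofReal_mulVec, hv]
    ext; simp
  have hquad : star w ⬝ᵥ (Y.map ofReal - I • S.map ofReal) *ᵥ w = 0 := by
    have hstar : star w = w := funext fun i => conj_ofReal (v i)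
    have hSquad : w ⬝ᵥ S.map ofReal *ᵥ w = 0 := by
      have h := RingHom.map_dotProduct ofRealHom v (S *ᵥ v)
      rw [dotProduct_mulVec_self_eq_zero_of_transpose_eq_neg hS, map_zero] at h
      rw [map_ofReal_mulVec]
      exact h.symm
    rw [hstar, sub_mulVec, dotProduct_sub, smul_mulVec, dotProduct_smul, hYw, hSquad,
      dotProduct_zero, smul_zero, sub_zero]
  have hSw : I • (S.map ofReal *ᵥ w) = 0 := by
    simpa [sub_mulVec, smul_mulVec, hYw] using (hYS.dotProduct_mulVec_zero_iff w).mp hquad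
  rw [smul_eq_zero_iff_right I_ne_zero, map_ofReal_mulVec] at hSw
  ext i
  simpa using congrFun hSw i

theorem rank_Y_ge_rank_Sigma_general (n : ℕ)
    (X Y : Matrix (Fin n ⊕ Fin n) (Fin n ⊕ Fin n) ℝ)
    (hY : Matrix.PosSemidef
      (Y.map Complex.ofReal -
        Complex.I • ((symJ n - X * symJ n * Xᵀ).map Complex.ofReal))) :
    (symJ n - X * symJ n * Xᵀ).rank ≤ Y.rank := by
  have hS : (symJ n - X * symJ n * Xᵀ)ᵀ = -(symJ n - X * symJ n * Xᵀ) := by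
    rw [transpose_sub, symJ_transpose,
      transpose_mul_mul_transpose_of_transpose_eq_neg (symJ_transpose n), neg_sub, sub_neg_eq_add,
      neg_add_eq_sub]
  refine rank_le_rank_of_ker_mulVecLin_le fun v hv => ?_
  exact mulVec_eq_zero_of_posSemidef_sub_I_smul hS hY hv

theorem rank_Y_ge_rank_Sigma (n : ℕ)
    (X Y : Matrix (Fin n ⊕ Fin n) (Fin n ⊕ Fin n) ℝ)
    (hYsym : Yᵀ = Y)
    (hY : Matrix.PosSemidef
      (Y.map Complex.ofReal -
        Complex.I • ((symJ n - X * symJ n * Xᵀ).map Complex.ofReal))) :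
    (symJ n - X * symJ n * Xᵀ).rank ≤ Y.rank :=
  rank_Y_ge_rank_Sigma_general n X Y hY
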